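/- Let ν ∈ ℝ with ν ≠ 0, let κ_ν be the smallest positive half-integer (element of ℕ + 1/2) with κ_ν² > ν² + 1/4, and define C^ν := 1 − (ν²·(κ_ν² + 1/4)/(κ_ν² − 1/4)²)·( √( 1 + (4κ_ν² − ν²)·(κ_ν² − 1/4)²/((κ_ν² + 1/4)²·ν²) ) − 1 ). Define the quadratic f_ν(b) := (κ_ν² − 1/4)²·b² + 2(κ_ν² + 1/4)·ν²·b + ν⁴ − 4ν²κ_ν². Then f_ν(0) < 0, f_ν(1) = (κ_ν² − ν² − 1/4)² > 0, 0 < 1 − C^ν < 1, f_ν(1 − C^ν) = 0, and 1 − C^ν is the unique zero of f_ν in the interval (0, 1). -/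
import Mathlib


/-- The constant `C^ν` of Lemma on higher angular momentum channels. -/
noncomputable def Cnu (ν κν : ℝ) : ℝ :=
  1 - ν ^ 2 * (κν ^ 2 + 1 / 4) / (κν ^ 2 - 1 / 4) ^ 2 *
    (Real.sqrt (1 + (4 * κν ^ 2 - ν ^ 2) * (κν ^ 2 - 1 / 4) ^ 2 /
        ((κν ^ 2 + 1 / 4) ^ 2 * ν ^ 2)) - 1)

/-- The quadratic `f_ν(b) = (κν² − 1/4)²b² + 2(κν² + 1/4)ν²b + ν⁴ − 4ν²κν²`. -/
noncomputable def fQuad (ν κν b : ℝ) : ℝ :=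
  (κν ^ 2 - 1 / 4) ^ 2 * b ^ 2 + 2 * (κν ^ 2 + 1 / 4) * ν ^ 2 * b + ν ^ 4 - 4 * ν ^ 2 * κν ^ 2

set_option maxHeartbeats 1000000 in
/-- Let `ν ≠ 0` and let `κν` be the smallest positive half-integer with `κν² > ν² + 1/4`.
Then `f_ν(0) < 0`, `f_ν(1) = (κν² − ν² − 1/4)² > 0`, `0 < 1 − C^ν < 1`, `f_ν(1 − C^ν) = 0`,
and `1 − C^ν` is the unique zero of `f_ν` in `(0, 1)`. -/
theorem quadratic_root_properties (ν : ℝ) (hν : ν ≠ 0) (κν : ℝ)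
    (hκν_half : ∃ n : ℕ, κν = n + 1 / 2)
    (hκν_gt : κν ^ 2 > ν ^ 2 + 1 / 4)
    (hκν_min : ∀ κ : ℝ, (∃ n : ℕ, κ = n + 1 / 2) → κ ^ 2 > ν ^ 2 + 1 / 4 → κν ≤ κ) :
    fQuad ν κν 0 < 0 ∧
    fQuad ν κν 1 = (κν ^ 2 - ν ^ 2 - 1 / 4) ^ 2 ∧
    fQuad ν κν 1 > 0 ∧
    0 < 1 - Cnu ν κν ∧
    1 - Cnu ν κν < 1 ∧
    fQuad ν κν (1 - Cnu ν κν) = 0 ∧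
    ∀ b : ℝ, b ∈ Set.Ioo (0 : ℝ) 1 → fQuad ν κν b = 0 → b = 1 - Cnu ν κν := by
  have hν2 : (0:ℝ) < ν ^ 2 := by positivity
  have hκ14 : (1:ℝ)/4 < κν ^ 2 := by nlinarith
  have hA : (0:ℝ) < (κν ^ 2 - 1/4) ^ 2 := by nlinarith
  have hAne : (κν ^ 2 - 1/4) ^ 2 ≠ 0 := ne_of_gt hA
  have hMne : ((κν ^ 2 + 1/4) ^ 2 * ν ^ 2) ≠ 0 := by positivity
  obtain ⟨t, ht⟩ : ∃ t : ℝ, t = (4 * κν ^ 2 - ν ^ 2) * (κν ^ 2 - 1 / 4) ^ 2 /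
      ((κν ^ 2 + 1 / 4) ^ 2 * ν ^ 2) := ⟨_, rfl⟩
  have ht0 : 0 < t := by
    rw [ht]; apply div_pos (by nlinarith) (by positivity)
  obtain ⟨s, hsdef⟩ : ∃ s : ℝ, s = Real.sqrt (1 + t) := ⟨_, rfl⟩
  have hs2 : s ^ 2 = 1 + t := by rw [hsdef]; exact Real.sq_sqrt (by linarith)
  have hs1 : 1 < s := by
    rw [hsdef, show (1:ℝ) = Real.sqrt 1 by simp]
    exact Real.sqrt_lt_sqrt (by norm_num) (by simp; linarith)
  have hs2' : s ^ 2 * ((κν ^ 2 + 1/4) ^ 2 * ν ^ 2)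
      = (κν ^ 2 + 1/4) ^ 2 * ν ^ 2 + (4 * κν ^ 2 - ν ^ 2) * (κν ^ 2 - 1/4) ^ 2 := by
    rw [hs2, ht]; field_simp
  obtain ⟨r, hrdef⟩ : ∃ r : ℝ, r = 1 - Cnu ν κν := ⟨_, rfl⟩
  have hr : r = ν ^ 2 * (κν ^ 2 + 1 / 4) / (κν ^ 2 - 1 / 4) ^ 2 * (s - 1) := by
    rw [hrdef, Cnu, hsdef, ht]; ring
  have hr' : r * (κν ^ 2 - 1/4) ^ 2 = ν ^ 2 * (κν ^ 2 + 1/4) * (s - 1) := by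
    rw [hr, div_mul_eq_mul_div, div_mul_eq_mul_div, div_eq_iff hAne]
  have hrpos : 0 < r := by
    rw [hr]
    apply mul_pos (div_pos (by nlinarith) hA) (by linarith)
  have hf1 : fQuad ν κν 1 = (κν ^ 2 - ν ^ 2 - 1 / 4) ^ 2 := by unfold fQuad; ring
  have hf1pos : fQuad ν κν 1 > 0 := by rw [hf1]; nlinarith
  have hfr : fQuad ν κν r = 0 := by
    have key : fQuad ν κν r * (κν ^ 2 - 1/4) ^ 2 = 0 := by
      unfold fQuad
      linear_combination (r * (κν ^ 2 - 1/4) ^ 2 + ν ^ 2 * (κν ^ 2 + 1/4) * (s - 1)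
          + 2 * ν ^ 2 * (κν ^ 2 + 1/4)) * hr' + ν ^ 2 * hs2'
    exact (mul_eq_zero.mp key).resolve_right hAne
  have hr1 : r < 1 := by
    by_contra h
    push_neg at h
    have h2 : fQuad ν κν r - fQuad ν κν 1
        = (r - 1) * ((κν ^ 2 - 1/4) ^ 2 * (r + 1) + 2 * (κν ^ 2 + 1/4) * ν ^ 2) := by
      unfold fQuad; ring
    have h3 : 0 ≤ (r - 1) * ((κν ^ 2 - 1/4) ^ 2 * (r + 1) + 2 * (κν ^ 2 + 1/4) * ν ^ 2) :=
      mul_nonneg (by linarith) (by nlinarith)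
    rw [hfr] at h2
    rw [← h2] at h3
    linarith
  rw [← hrdef]
  refine ⟨?_, hf1, hf1pos, hrpos, hr1, hfr, ?_⟩
  · unfold fQuad; nlinarith
  · intro b hb hfb
    obtain ⟨hb0, hb1⟩ := hb
    have key : (b - r) * ((κν ^ 2 - 1/4) ^ 2 * (b + r) + 2 * (κν ^ 2 + 1/4) * ν ^ 2) = 0 := by
      unfold fQuad at hfb hfr
      linear_combination hfb - hfr
    have hpos : (κν ^ 2 - 1/4) ^ 2 * (b + r) + 2 * (κν ^ 2 + 1/4) * ν ^ 2 > 0 := by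
      nlinarith
    have := (mul_eq_zero.mp key).resolve_right (ne_of_gt hpos)
    linarith
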